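/- arXiv:2107.02204 — 2 statements merged into one kernel-verified Lean document; each statement's English description precedes it below -/
import Mathlib

section
/- Let I ⊂ S = K[x_0, x_1, x_2] be a saturated Borel-fixed monomial ideal over an infinite field with Hilbert polynomial (of S/I) equal to the constant 3. Then I equals either ⟨x_0, x_1^3⟩ or ⟨x_0^2, x_0 x_1, x_1^2⟩. -/
open MvPolynomial

/-- A matrix is upper triangular if entries below the diagonal vanish. -/
def UpperTriangular {K : Type} [Field K] {m : ℕ} (γ : Matrix (Fin m) (Fin m) K) : Prop :=
  ∀ i j : Fin m, j < i → γ i j = 0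

/-- The linear action of a matrix `γ` on the polynomial ring, `γ · x_j = Σ_i γ_{ij} x_i`. -/
noncomputable def borelAct {K : Type} [Field K] {m : ℕ} (γ : Matrix (Fin m) (Fin m) K) :
    MvPolynomial (Fin m) K →+* MvPolynomial (Fin m) K :=
  (aeval (fun j => ∑ i, C (γ i j) * X i)).toRingHom

/-- An ideal is Borel-fixed if it is fixed by every invertible upper-triangular matrix
acting linearly on the variables. -/
def BorelFixed {K : Type} [Field K] {m : ℕ} (I : Ideal (MvPolynomial (Fin m) K)) : Prop :=
  ∀ γ : Matrix (Fin m) (Fin m) K, UpperTriangular γ → IsUnit γ.det →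
    Ideal.map (borelAct γ) I = I

/-- A monomial ideal: with every polynomial it contains all of its monomials. -/
def IsMonomialIdeal {K : Type} [Field K] {m : ℕ} (I : Ideal (MvPolynomial (Fin m) K)) : Prop :=
  ∀ f ∈ I, ∀ u ∈ f.support, (monomial u 1 : MvPolynomial (Fin m) K) ∈ I

/-- The strong stability exchange condition: `m ∈ I`, `x_j ∣ m`, `i < j` imply `x_i m / x_j ∈ I`. -/
def StronglyStable {K : Type} [Field K] {m : ℕ} (I : Ideal (MvPolynomial (Fin m) K)) : Prop :=
  ∀ u : Fin m →₀ ℕ, (monomial u 1 : MvPolynomial (Fin m) K) ∈ I →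
    ∀ i j : Fin m, i < j → u j ≠ 0 →
      (monomial (u + Finsupp.single i 1 - Finsupp.single j 1) 1 : MvPolynomial (Fin m) K) ∈ I

/-- The saturation `(I : J^∞) = ⋃_k (I : J^k)`. -/
noncomputable def idealSat {R : Type} [CommRing R] (I J : Ideal R) : Ideal R :=
  ⨆ k : ℕ, Submodule.colon I ((J ^ k : Ideal R) : Set R)

/-- The irrelevant maximal ideal `⟨x_0, …, x_m⟩`. -/
noncomputable def irrelevant (m : ℕ) (K : Type) [Field K] : Ideal (MvPolynomial (Fin m) K) :=
  Ideal.span (Set.range X)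

/-- The Hilbert function of `S/I`: the dimension of the image of the degree-`i`
homogeneous component in `S/I`. -/
noncomputable def hfn {K : Type} [Field K] {m : ℕ} (I : Ideal (MvPolynomial (Fin m) K))
    (i : ℕ) : ℕ :=
  Module.finrank K
    ((homogeneousSubmodule (Fin m) K i).map (Ideal.Quotient.mkₐ K I).toLinearMap)

/-- The set of (exponents of) minimal monomial generators of a monomial ideal. -/
def minGens {K : Type} [Field K] {m : ℕ} (I : Ideal (MvPolynomial (Fin m) K)) :
    Set (Fin m →₀ ℕ) :=
  {u | (monomial u 1 : MvPolynomial (Fin m) K) ∈ I ∧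
    ∀ v : Fin m →₀ ℕ, v ≤ u → v ≠ u → (monomial v 1 : MvPolynomial (Fin m) K) ∉ I}

/-!
A Borel-fixed ideal is stable under the substitution `x_j ↦ x_j + x_i` for `i < j`. Applied to
`x^w x_j^n` with `x_j ∤ x^w`, the image contains `x^w x_i^n` with coefficient `1`, so a monomial
ideal may trade `x_j^n` for `x_i^n`. With saturation this divides out `x_2`: if
`x^u = x^w x_2^c ∈ I`, then `x^w x_l^c ∈ I` for every `l`, and every monomial of degree `3c`
is divisible by some `x_l^c`, so `x^w ∈ I`. Hence the Hilbert function in degree `n` counts the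
points `(a, b)` with `a + b ≤ n` of the staircase `{(a, b) | x_0^a x_1^b ∉ I}`. A constant
Hilbert polynomial `3` makes the staircase a lower set of three points, and the move
`x_1 → x_0` excludes `{(0,0), (1,0), (2,0)}`, leaving the two ideals of the statement.
-/

namespace MvPolynomial

variable {σ : Type*}

theorem monomial_one_mem_of_le {R : Type*} [CommSemiring R] {I : Ideal (MvPolynomial σ R)}
    {u v : σ →₀ ℕ} (h : monomial u (1 : R) ∈ I) (huv : u ≤ v) : monomial v (1 : R) ∈ I :=
  I.mem_of_dvd (monomial_dvd_monomial.mpr ⟨Or.inr huv, one_dvd _⟩) h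

theorem coeff_single_X_add_X_pow {R : Type*} [CommRing R] {i j : σ} (hij : i ≠ j) (n : ℕ) :
    coeff (Finsupp.single i n) ((X j + X i : MvPolynomial σ R) ^ n) = 1 := by
  classical
  obtain ⟨q, hq⟩ := sub_dvd_pow_sub_pow (X j + X i : MvPolynomial σ R) (X i) n
  rw [add_sub_cancel_right, sub_eq_iff_eq_add'] at hq
  rw [hq, coeff_add, coeff_X_pow, coeff_X_mul', if_pos rfl, if_neg]
  · simp
  · simpa [Finsupp.mem_support_iff, Finsupp.single_apply] using fun h => absurd h hij

end MvPolynomial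

variable {K : Type} [Field K] {m : ℕ}

namespace IsMonomialIdeal

variable {I : Ideal (MvPolynomial (Fin m) K)}

theorem eq_span_monomial (hI : IsMonomialIdeal I) (s : Set (Fin m →₀ ℕ))
    (h : ∀ u, monomial u 1 ∈ I ↔ ∃ v ∈ s, v ≤ u) :
    I = Ideal.span ((fun v => monomial v 1) '' s) := by
  ext f
  rw [mem_ideal_span_monomial_image]
  refine ⟨fun hf u hu => (h u).mp (hI f hf u hu), fun hf => ?_⟩
  rw [← support_sum_monomial_coeff f]
  refine I.sum_mem fun u hu => ?_
  rw [← mul_one (coeff u f), ← C_mul_monomial]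
  exact I.mul_mem_left _ ((h u).mpr (hf u hu))

theorem hfn_eq_ncard (hI : IsMonomialIdeal I) (n : ℕ) :
    hfn I n = {u : Fin m →₀ ℕ | u.degree = n ∧ monomial u 1 ∉ I}.ncard := by
  set T := {u : Fin m →₀ ℕ | u.degree = n ∧ monomial u 1 ∉ I}
  set A := {u : Fin m →₀ ℕ | u.degree = n ∧ monomial u 1 ∈ I}
  set mk := (Ideal.Quotient.mkₐ K I).toLinearMap
  have hsplit : homogeneousSubmodule (Fin m) K n =
      AddMonoidAlgebra.supported K K T ⊔ AddMonoidAlgebra.supported K K A := by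
    have hTA : {u : Fin m →₀ ℕ | u.degree = n} = T ∪ A := by
      ext u
      by_cases hu : monomial u (1 : K) ∈ I <;> simp [T, A, hu]
    simp only [homogeneousSubmodule_eq_finsupp_supported,
      AddMonoidAlgebra.supported_eq_span_single, ← Submodule.span_union, ← Set.image_union, hTA]
  have hA : (AddMonoidAlgebra.supported K K A).map mk = ⊥ := by
    rw [eq_bot_iff, Submodule.map_le_iff_le_comap, Submodule.comap_bot,
      AddMonoidAlgebra.supported_eq_span_single, Submodule.span_le]
    rintro _ ⟨u, hu, rfl⟩
    exact Ideal.Quotient.eq_zero_iff_mem.mpr hu.2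
  have hT : Disjoint (AddMonoidAlgebra.supported K K T) (LinearMap.ker mk) := by
    rw [Submodule.disjoint_def]
    intro f hfT hfI
    rw [← support_eq_empty, Finset.eq_empty_iff_forall_notMem]
    intro u hu
    exact (hfT hu).2 (hI f (Ideal.Quotient.eq_zero_iff_mem.mp hfI) u hu)
  rw [hfn, hsplit, Submodule.map_sup, hA, sup_bot_eq, ← LinearMap.range_domRestrict,
    LinearMap.finrank_range_of_inj (LinearMap.injective_domRestrict_iff.mpr hT),
    (AddMonoidAlgebra.supportedEquivFinsupp T).finrank_eq, Module.finrank, rank_finsupp_self',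
    ← Nat.card_coe_set_eq]
  rfl

end IsMonomialIdeal

theorem irrelevant_pow_le_span_monomial (k : ℕ) :
    irrelevant m K ^ k ≤ Ideal.span ((fun v => monomial v 1) '' {v | v.degree = k}) := by
  induction k with
  | zero => simp [Ideal.one_eq_top, Finsupp.degree_eq_zero_iff]
  | succ k ih =>
    rw [pow_succ]
    refine (Ideal.mul_mono_left ih).trans ?_
    rw [irrelevant, Ideal.span_mul_span', Ideal.span_le]
    rintro _ ⟨_, ⟨v, hv, rfl⟩, _, ⟨l, rfl⟩, rfl⟩
    refine Ideal.subset_span ⟨v + Finsupp.single l 1, ?_, ?_⟩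
    · simp_all
    · simp [X, monomial_mul]

theorem mem_of_idealSat_eq {I : Ideal (MvPolynomial (Fin m) K)}
    (hsat : idealSat I (irrelevant m K) = I) {f : MvPolynomial (Fin m) K} (k : ℕ)
    (h : ∀ v : Fin m →₀ ℕ, v.degree = k → f * monomial v 1 ∈ I) : f ∈ I := by
  rw [← hsat]
  refine Submodule.mem_iSup_of_mem k (Submodule.mem_colon.mpr fun p hp => ?_)
  have hspan : Ideal.span ((fun v => monomial v 1) '' {v | v.degree = k}) ≤
      Submodule.comap (LinearMap.mulLeft (MvPolynomial (Fin m) K) f) I := by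
    rw [Ideal.span_le]
    rintro _ ⟨v, hv, rfl⟩
    exact h v hv
  exact hspan (irrelevant_pow_le_span_monomial k hp)

theorem upperTriangular_transvection {i j : Fin m} (hij : i < j) (c : K) :
    UpperTriangular (Matrix.transvection i j c) := by
  intro a b hba
  simp only [Matrix.transvection, Matrix.add_apply, Matrix.one_apply_ne hba.ne',
    Matrix.single_apply]
  grind

theorem borelAct_transvection_X (i j l : Fin m) (c : K) :
    borelAct (Matrix.transvection i j c) (X l) = X l + if l = j then C c * X i else 0 := by
  simp only [borelAct, AlgHom.toRingHom_eq_coe, RingHom.coe_coe, aeval_X, Matrix.transvection,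
    Matrix.add_apply, Matrix.one_apply, Matrix.single_apply, map_add, add_mul,
    Finset.sum_add_distrib]
  split_ifs with h <;> simp [h, apply_ite C, ite_mul, eq_comm (a := j)]

theorem borelAct_transvection_monomial {i j : Fin m} {w : Fin m →₀ ℕ} (hw : w j = 0) (n : ℕ) :
    borelAct (Matrix.transvection i j (1 : K)) (monomial (w + Finsupp.single j n) 1) =
      monomial w 1 * (X j + X i) ^ n := by
  have hfix : borelAct (Matrix.transvection i j (1 : K)) (monomial w 1) = monomial w 1 := by
    rw [monomial_eq, map_mul, map_finsuppProd, C_1, map_one]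
    refine congrArg _ (Finsupp.prod_congr fun l hl => ?_)
    rw [map_pow, borelAct_transvection_X, if_neg (by rintro rfl; simp_all), add_zero]
  have hsplit : (monomial (w + Finsupp.single j n) 1 : MvPolynomial (Fin m) K) =
      monomial w 1 * X j ^ n := by
    rw [X_pow_eq_monomial, monomial_mul, one_mul]
  rw [hsplit, map_mul, map_pow, borelAct_transvection_X, if_pos rfl, C_1, one_mul, hfix]

namespace BorelFixed

/-- Trading the whole power `x_j^n` avoids the binomial coefficients of the intermediate terms,
which may vanish in positive characteristic. -/
theorem monomial_mem_of_exchange {I : Ideal (MvPolynomial (Fin m) K)} (hbf : BorelFixed I)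
    (hmon : IsMonomialIdeal I) {i j : Fin m} (hij : i < j) {w : Fin m →₀ ℕ} (hw : w j = 0) {n : ℕ}
    (h : monomial (w + Finsupp.single j n) 1 ∈ I) :
    monomial (w + Finsupp.single i n) 1 ∈ I := by
  have himage : monomial w 1 * (X j + X i) ^ n ∈ I := by
    rw [← borelAct_transvection_monomial hw, ← hbf _ (upperTriangular_transvection hij 1)
      (by rw [Matrix.det_transvection_of_ne _ _ hij.ne]; exact isUnit_one)]
    exact Ideal.mem_map_of_mem _ h
  refine hmon _ himage _ ?_
  rw [mem_support_iff, coeff_monomial_mul, coeff_single_X_add_X_pow hij.ne, one_mul]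
  exact one_ne_zero

theorem monomial_erase_last_mem {I : Ideal (MvPolynomial (Fin (m + 1)) K)}
    (hbf : BorelFixed I) (hmon : IsMonomialIdeal I)
    (hsat : idealSat I (irrelevant (m + 1) K) = I) {u : Fin (m + 1) →₀ ℕ}
    (h : monomial u 1 ∈ I) : monomial (u.erase (Fin.last m)) 1 ∈ I := by
  set w := u.erase (Fin.last m)
  set c := u (Fin.last m)
  have hw : w (Fin.last m) = 0 := Finsupp.erase_same
  have hu : w + Finsupp.single (Fin.last m) c = u := Finsupp.erase_add_single _ _
  have hvar : ∀ l, monomial (w + Finsupp.single l c) 1 ∈ I := by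
    intro l
    rcases (Fin.le_last l).lt_or_eq with hl | rfl
    · exact hbf.monomial_mem_of_exchange hmon hl hw (hu ▸ h)
    · rwa [hu]
  refine mem_of_idealSat_eq hsat ((m + 1) * c) fun v hv => ?_
  obtain ⟨l, -, hl⟩ : ∃ l ∈ Finset.univ, c ≤ v l :=
    Finset.exists_le_of_sum_le Finset.univ_nonempty (by simp [← Finsupp.degree_eq_sum, hv])
  rw [monomial_mul, one_mul]
  exact monomial_one_mem_of_le (hvar l) (add_le_add_right (Finsupp.single_le_iff.mpr hl) _)

end BorelFixed

theorem finite_and_ncard_eq_of_ncard_truncation_eventually_eq {D : Set (ℕ × ℕ)} {N c : ℕ}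
    (h : ∀ n ≥ N, {p ∈ D | p.1 + p.2 ≤ n}.ncard = c) : D.Finite ∧ D.ncard = c := by
  have hfin (n : ℕ) : {p ∈ D | p.1 + p.2 ≤ n}.Finite :=
    (Set.finite_Iic (n, n)).subset fun p hp =>
      Prod.mk_le_mk.mpr ⟨by have := hp.2; omega, by have := hp.2; omega⟩
  have hD : {p ∈ D | p.1 + p.2 ≤ N} = D := by
    refine (Set.sep_subset _ _).antisymm fun p hp => ?_
    have hsub : {q ∈ D | q.1 + q.2 ≤ N} ⊆ {q ∈ D | q.1 + q.2 ≤ N + p.1 + p.2} :=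
      fun q hq => ⟨hq.1, by have := hq.2; omega⟩
    rw [Set.eq_of_subset_of_ncard_le hsub (by rw [h _ (by omega), h N le_rfl]) (hfin _)]
    exact ⟨hp, by omega⟩
  rw [← hD]
  exact ⟨hfin N, h N le_rfl⟩

theorem eq_of_isLowerSet_of_ncard_eq_three {D : Set (ℕ × ℕ)} (hlow : IsLowerSet D)
    (hfin : D.Finite) (hcard : D.ncard = 3) (hB : (1, 0) ∈ D → (0, 1) ∈ D) :
    D = {(0, 0), (0, 1), (0, 2)} ∨ D = {(0, 0), (1, 0), (0, 1)} := by
  have hsub_eq {a b c : ℕ × ℕ} (hab : a ≠ b) (hac : a ≠ c) (hbc : b ≠ c)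
      (hsub : {a, b, c} ⊆ D) : D = {a, b, c} :=
    (Set.eq_of_subset_of_ncard_le hsub
      (by rw [hcard, Set.ncard_eq_three.mpr ⟨a, b, c, hab, hac, hbc, rfl⟩]) hfin).symm
  obtain ⟨p, hp⟩ : D.Nonempty := Set.nonempty_of_ncard_ne_zero (by omega)
  have h00 : (0, 0) ∈ D := hlow (Prod.mk_le_mk.mpr ⟨Nat.zero_le _, Nat.zero_le _⟩) hp
  by_cases h10 : (1, 0) ∈ D
  · right
    exact hsub_eq (by decide) (by decide) (by decide)
      (by simp [Set.insert_subset_iff, h00, h10, hB h10])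
  by_cases h02 : (0, 2) ∈ D
  · left
    have h01 : (0, 1) ∈ D := hlow (by decide) h02
    exact hsub_eq (by decide) (by decide) (by decide)
      (by simp [Set.insert_subset_iff, h00, h01, h02])
  have hsub : D ⊆ {(0, 0), (0, 1)} := by
    rintro ⟨a, b⟩ hab
    have ha : a = 0 := by
      by_contra ha
      exact h10 (hlow (Prod.mk_le_mk.mpr ⟨by omega, Nat.zero_le _⟩) hab)
    have hb : b ≤ 1 := by
      by_contra hb
      exact h02 (hlow (Prod.mk_le_mk.mpr ⟨Nat.zero_le _, by omega⟩) hab)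
    interval_cases b <;> simp [ha]
  have := Set.ncard_le_ncard hsub (Set.toFinite _)
  rw [Set.ncard_pair (by decide)] at this
  omega

section Staircase

variable {I : Ideal (MvPolynomial (Fin 3) K)}

def staircase (I : Ideal (MvPolynomial (Fin 3) K)) : Set (ℕ × ℕ) :=
  {p | monomial (Finsupp.single 0 p.1 + Finsupp.single 1 p.2) 1 ∉ I}

theorem isLowerSet_staircase (I : Ideal (MvPolynomial (Fin 3) K)) :
    IsLowerSet (staircase I) :=
  fun _ _ hqp hp hq => hp (monomial_one_mem_of_le hq
    (add_le_add (Finsupp.single_le_single.mpr hqp.1) (Finsupp.single_le_single.mpr hqp.2)))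

theorem BorelFixed.mem_staircase_zero_one (hbf : BorelFixed I) (hmon : IsMonomialIdeal I)
    (h : (1, 0) ∈ staircase I) : (0, 1) ∈ staircase I := by
  intro h01
  refine h ?_
  simpa using hbf.monomial_mem_of_exchange hmon (show (0 : Fin 3) < 1 by decide) (w := 0) rfl
    (by simpa using h01)

theorem monomial_mem_iff_notMem_staircase (hbf : BorelFixed I) (hmon : IsMonomialIdeal I)
    (hsat : idealSat I (irrelevant 3 K) = I) (u : Fin 3 →₀ ℕ) :
    monomial u 1 ∈ I ↔ (u 0, u 1) ∉ staircase I := by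
  have herase : u.erase (Fin.last 2) = Finsupp.single 0 (u 0) + Finsupp.single 1 (u 1) := by
    ext l
    fin_cases l <;> simp
  rw [staircase, Set.mem_ofPred_eq, not_not, ← herase]
  exact ⟨hbf.monomial_erase_last_mem hmon hsat, fun h =>
    monomial_one_mem_of_le h (le_self_add.trans_eq (Finsupp.erase_add_single _ _))⟩

theorem hfn_eq_ncard_staircase (hbf : BorelFixed I) (hmon : IsMonomialIdeal I)
    (hsat : idealSat I (irrelevant 3 K) = I) (n : ℕ) :
    hfn I n = {p ∈ staircase I | p.1 + p.2 ≤ n}.ncard := by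
  have hdeg (u : Fin 3 →₀ ℕ) : u.degree = u 0 + u 1 + u 2 := by
    rw [Finsupp.degree_eq_sum, Fin.sum_univ_three]
  rw [hmon.hfn_eq_ncard]
  refine Set.ncard_congr (fun u _ => (u 0, u 1)) ?_ ?_ ?_
  · rintro u ⟨hu, huI⟩
    rw [monomial_mem_iff_notMem_staircase hbf hmon hsat, not_not] at huI
    exact ⟨huI, by simp only [← hu, hdeg]; omega⟩
  · rintro u v ⟨hu, -⟩ ⟨hv, -⟩ huv
    simp only [Prod.mk.injEq, hdeg] at huv hu hv
    ext l
    fin_cases l <;> simp only [Fin.zero_eta, Fin.mk_one, Fin.reduceFinMk] <;> omega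
  · rintro ⟨a, b⟩ ⟨hab, hle⟩
    refine ⟨Finsupp.single 0 a + Finsupp.single 1 b + Finsupp.single 2 (n - a - b), ⟨?_, ?_⟩, ?_⟩
    · simp only [hdeg, Finsupp.coe_add, Pi.add_apply, Finsupp.single_apply, Fin.reduceEq,
        ↓reduceIte]
      omega
    · rw [monomial_mem_iff_notMem_staircase hbf hmon hsat]
      simpa using hab
    · simp

end Staircase

theorem borelFixed_hilbPoly_three_general {K : Type} [Field K]
    (I : Ideal (MvPolynomial (Fin 3) K))
    (hmon : IsMonomialIdeal I) (hbf : BorelFixed I)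
    (hsat : idealSat I (irrelevant 3 K) = I)
    (hhp : ∃ N : ℕ, ∀ i ≥ N, hfn I i = 3) :
    I = Ideal.span {(X 0 : MvPolynomial (Fin 3) K), X 1 ^ 3} ∨
    I = Ideal.span {(X 0 ^ 2 : MvPolynomial (Fin 3) K), X 0 * X 1, X 1 ^ 2} := by
  obtain ⟨N, hN⟩ := hhp
  obtain ⟨hfin, hcard⟩ := finite_and_ncard_eq_of_ncard_truncation_eventually_eq
    fun n hn => (hfn_eq_ncard_staircase hbf hmon hsat n).symm.trans (hN n hn)
  have hmem := monomial_mem_iff_notMem_staircase hbf hmon hsat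
  rcases eq_of_isLowerSet_of_ncard_eq_three (isLowerSet_staircase I) hfin hcard
    (hbf.mem_staircase_zero_one hmon) with hD | hD
  · left
    have hgens : ({X 0, X 1 ^ 3} : Set (MvPolynomial (Fin 3) K)) =
        (fun v => monomial v 1) '' {Finsupp.single 0 1, Finsupp.single 1 3} := by
      simp [Set.image_pair, X, monomial_pow]
    rw [hgens]
    refine hmon.eq_span_monomial _ fun u => ?_
    simp only [hmem, hD, Set.mem_insert_iff, Set.mem_singleton_iff, Prod.mk.injEq,
      exists_eq_or_imp, exists_eq_left, Finsupp.single_le_iff]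
    omega
  · right
    have hgens : ({X 0 ^ 2, X 0 * X 1, X 1 ^ 2} : Set (MvPolynomial (Fin 3) K)) =
        (fun v => monomial v 1) ''
          {Finsupp.single 0 2, Finsupp.single 0 1 + Finsupp.single 1 1, Finsupp.single 1 2} := by
      simp [Set.image_insert_eq, X, monomial_pow, monomial_mul]
    rw [hgens]
    refine hmon.eq_span_monomial _ fun u => ?_
    simp only [hmem, hD, Set.mem_insert_iff, Set.mem_singleton_iff, Prod.mk.injEq,
      exists_eq_or_imp, exists_eq_left, Finsupp.le_def, Fin.forall_fin_succ, Finsupp.coe_add,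
      Pi.add_apply, Finsupp.single_apply, Fin.reduceEq, Fin.reduceSucc, ↓reduceIte,
      IsEmpty.forall_iff, and_true]
    omega

/-- A saturated Borel-fixed monomial ideal in `K[x_0, x_1, x_2]` over an infinite field,
with Hilbert polynomial of the quotient the constant `3`, is `⟨x_0, x_1^3⟩` or
`⟨x_0^2, x_0 x_1, x_1^2⟩`. -/
theorem borelFixed_hilbPoly_three {K : Type} [Field K] [Infinite K]
    (I : Ideal (MvPolynomial (Fin 3) K))
    (hmon : IsMonomialIdeal I) (hbf : BorelFixed I)
    (hsat : idealSat I (irrelevant 3 K) = I)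
    (hhp : ∃ N : ℕ, ∀ i ≥ N, hfn I i = 3) :
    I = Ideal.span {(X 0 : MvPolynomial (Fin 3) K), X 1 ^ 3} ∨
    I = Ideal.span {(X 0 ^ 2 : MvPolynomial (Fin 3) K), X 0 * X 1, X 1 ^ 2} :=
  borelFixed_hilbPoly_three_general I hmon hbf hsat hhp
end

section
/- Over the field F_2, the ideal I = ⟨x_0^2 + x_0 x_1 + x_1^2⟩ ⊂ F_2[x_0, x_1, x_2] is fixed by the action of every invertible upper-triangular matrix in GL_3(F_2), and the Hilbert polynomial of the quotient ring is 2t + 1. -/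
/-! Over `F_2` an invertible upper-triangular matrix has ones on the diagonal, so it sends
`x_0 ↦ x_0` and `x_1 ↦ a x_0 + x_1`; this changes `q = x_0^2 + x_0 x_1 + x_1^2` by
`(a + a^2) x_0^2`, which vanishes because `a^2 = a` in `F_2`. Multiplication by the nonzero
quadric `q` identifies `S_{i-2}` with `(q) ∩ S_i`, so
`dim (S/(q))_i = C(i+2, 2) - C(i, 2) = 2i + 1`. -/

open MvPolynomial

namespace MvPolynomial

variable {σ R : Type*}

attribute [local instance] MvPolynomial.gradedAlgebra in
theorem homogeneousComponent_add_mul [CommSemiring R] {f : MvPolynomial σ R} {d : ℕ}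
    (hf : f.IsHomogeneous d) (q : MvPolynomial σ R) (n : ℕ) :
    homogeneousComponent (d + n) (f * q) = f * homogeneousComponent n q := by
  rw [← decomposition.decompose'_apply, ← decomposition.decompose'_apply]
  exact DirectSum.coe_decompose_mul_add_of_left_mem _ (mem_homogeneousSubmodule d f |>.mpr hf)

theorem finrank_homogeneousSubmodule [Fintype σ] [DecidableEq σ] [CommRing R] [Nontrivial R]
    (n : ℕ) :
    Module.finrank R (homogeneousSubmodule σ R n) = (Fintype.card σ + n - 1).choose n := by
  have hdeg : {d : σ →₀ ℕ | d.degree = n} =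
      (Finset.univ.finsuppAntidiag n : Finset (σ →₀ ℕ)) := by
    ext d; simp [Finset.mem_finsuppAntidiag, Finsupp.degree_eq_sum]
  rw [Module.finrank_eq_nat_card_basis ((basisRestrictSupport R _).map
      (LinearEquiv.ofEq _ _ (homogeneousSubmodule_eq_finsupp_supported σ R n).symm)),
    hdeg, Nat.card_coe_set_eq, Set.ncard_coe_finset,
    Finset.card_finsuppAntidiag_nat_eq_choose, Finset.card_univ]

instance [Finite σ] [CommSemiring R] (n : ℕ) : Module.Finite R (homogeneousSubmodule σ R n) :=
  Module.Finite.iff_fg.mpr (homogeneousSubmodule_fg σ R n)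

theorem span_singleton_inf_homogeneousSubmodule [CommSemiring R] {f : MvPolynomial σ R} {d : ℕ}
    (hf : f.IsHomogeneous d) (n : ℕ) :
    (Ideal.span {f}).restrictScalars R ⊓ homogeneousSubmodule σ R (d + n) =
      (homogeneousSubmodule σ R n).map (LinearMap.mulLeft R f) := by
  apply le_antisymm
  · rintro g ⟨hg, hg_hom⟩
    obtain ⟨q, rfl⟩ := Ideal.mem_span_singleton.mp hg
    refine ⟨homogeneousComponent n q, homogeneousComponent_isHomogeneous n q, ?_⟩
    rw [LinearMap.mulLeft_apply, ← homogeneousComponent_add_mul hf,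
      homogeneousComponent_eq_self hg_hom]
  · rintro _ ⟨q, hq, rfl⟩
    exact ⟨Ideal.mul_mem_right q _ (Ideal.mem_span_singleton_self f), hf.mul hq⟩

end MvPolynomial

theorem hfn_span_singleton_add_finrank {K : Type} [Field K] {m : ℕ}
    {f : MvPolynomial (Fin m) K} {d : ℕ} (hf : f.IsHomogeneous d) (hf0 : f ≠ 0) (n : ℕ) :
    hfn (Ideal.span {f}) (d + n) + Module.finrank K (homogeneousSubmodule (Fin m) K n) =
      Module.finrank K (homogeneousSubmodule (Fin m) K (d + n)) := by
  set p := homogeneousSubmodule (Fin m) K (d + n)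
  set φ := (Ideal.Quotient.mkₐ K (Ideal.span {f})).toLinearMap
  have hker : LinearMap.ker φ = (Ideal.span {f}).restrictScalars K := by
    ext g; exact Ideal.Quotient.eq_zero_iff_mem
  have hmul : Function.Injective (LinearMap.mulLeft K f) := mul_right_injective₀ hf0
  have hker_finrank : Module.finrank K (LinearMap.ker (φ.domRestrict p)) =
      Module.finrank K (homogeneousSubmodule (Fin m) K n) := by
    rw [LinearMap.ker_domRestrict, hker, ← inf_top_eq (Submodule.comap _ _),
      ← Submodule.comap_subtype_self p, ← Submodule.comap_inf,
      (Submodule.comapSubtypeEquivOfLe inf_le_right).finrank_eq,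
      span_singleton_inf_homogeneousSubmodule hf,
      ← (Submodule.equivMapOfInjective _ hmul (homogeneousSubmodule (Fin m) K n)).finrank_eq]
  rw [hfn, ← LinearMap.range_domRestrict, ← hker_finrank]
  exact LinearMap.finrank_range_add_finrank_ker _

section BorelAction

variable {K : Type} [Field K] {m : ℕ} {γ : Matrix (Fin m) (Fin m) K}

theorem borelAct_X (γ : Matrix (Fin m) (Fin m) K) (j : Fin m) :
    borelAct γ (X j) = ∑ i, C (γ i j) * X i := by
  simp [borelAct]

theorem UpperTriangular.isUpperTriangular (hγ : UpperTriangular γ) : γ.IsUpperTriangular :=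
  fun i j h => hγ i j h

theorem UpperTriangular.diag_ne_zero (hγ : UpperTriangular γ) (hdet : IsUnit γ.det) (i : Fin m) :
    γ i i ≠ 0 := by
  have hprod := hdet.ne_zero
  rw [Matrix.det_of_isUpperTriangular hγ.isUpperTriangular] at hprod
  exact Finset.prod_ne_zero_iff.mp hprod i (Finset.mem_univ i)

theorem UpperTriangular.borelAct_X_zero {γ : Matrix (Fin (m + 2)) (Fin (m + 2)) K}
    (hγ : UpperTriangular γ) : borelAct γ (X 0) = C (γ 0 0) * X 0 := by
  rw [borelAct_X, Fin.sum_univ_succ, Finset.sum_eq_zero, add_zero]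
  intro i _
  rw [hγ _ _ i.succ_pos, C_0, zero_mul]

theorem UpperTriangular.borelAct_X_one {γ : Matrix (Fin (m + 2)) (Fin (m + 2)) K}
    (hγ : UpperTriangular γ) : borelAct γ (X 1) = C (γ 0 1) * X 0 + C (γ 1 1) * X 1 := by
  rw [borelAct_X, Fin.sum_univ_succ, Fin.sum_univ_succ, Finset.sum_eq_zero, add_zero]
  · rfl
  intro i _
  rw [hγ i.succ.succ 1 (Fin.succ_lt_succ_iff.mpr i.succ_pos), C_0, zero_mul]

end BorelAction

section F2

variable {m : ℕ}

theorem UpperTriangular.diag_eq_one_of_zmod_two {γ : Matrix (Fin m) (Fin m) (ZMod 2)}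
    (hγ : UpperTriangular γ) (hdet : IsUnit γ.det) (i : Fin m) : γ i i = 1 := by
  have hne := hγ.diag_ne_zero hdet i
  generalize γ i i = a at hne
  revert a; decide

theorem UpperTriangular.borelAct_quadric_zmod_two
    {γ : Matrix (Fin (m + 2)) (Fin (m + 2)) (ZMod 2)} (hγ : UpperTriangular γ)
    (hdet : IsUnit γ.det) :
    borelAct γ (X 0 ^ 2 + X 0 * X 1 + X 1 ^ 2) = X 0 ^ 2 + X 0 * X 1 + X 1 ^ 2 := by
  have hfrob :
      C (γ 0 1) * C (γ 0 1) + C (γ 0 1) = (0 : MvPolynomial (Fin (m + 2)) (ZMod 2)) := by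
    rw [← C_mul, ← C_add, ← pow_two, ZMod.pow_card, CharTwo.add_self_eq_zero, C_0]
  simp only [map_add, map_mul, map_pow, hγ.borelAct_X_zero, hγ.borelAct_X_one,
    hγ.diag_eq_one_of_zmod_two hdet, C_1, one_mul]
  linear_combination (X 0 ^ 2 : MvPolynomial (Fin (m + 2)) (ZMod 2)) * hfrob +
    C (γ 0 1) * X 0 * X 1 * CharTwo.two_eq_zero (R := MvPolynomial (Fin (m + 2)) (ZMod 2))

end F2

/-- Over `F_2`, the ideal `⟨x_0^2 + x_0 x_1 + x_1^2⟩ ⊂ F_2[x_0, x_1, x_2]` is Borel-fixed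
and the Hilbert polynomial of the quotient is `2t + 1`. -/
theorem f2_nonmonomial_borelFixed
    (I : Ideal (MvPolynomial (Fin 3) (ZMod 2)))
    (hI : I = Ideal.span {(X 0 ^ 2 + X 0 * X 1 + X 1 ^ 2 : MvPolynomial (Fin 3) (ZMod 2))}) :
    BorelFixed I ∧ ∃ N : ℕ, ∀ i ≥ N, (hfn I i : ℤ) = 2 * i + 1 := by
  subst hI
  have hq_hom : (X 0 ^ 2 + X 0 * X 1 + X 1 ^ 2 : MvPolynomial (Fin 3) (ZMod 2)).IsHomogeneous 2 :=
    ((isHomogeneous_X_pow _ _).add ((isHomogeneous_X _ _).mul (isHomogeneous_X _ _))).add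
      (isHomogeneous_X_pow _ _)
  have hq_ne : (X 0 ^ 2 + X 0 * X 1 + X 1 ^ 2 : MvPolynomial (Fin 3) (ZMod 2)) ≠ 0 := by
    intro h
    simpa using congrArg (eval fun j => if j = 0 then 1 else 0) h
  refine ⟨fun γ hγ hdet => ?_, 2, fun i hi => ?_⟩
  · rw [Ideal.map_span, Set.image_singleton, hγ.borelAct_quadric_zmod_two hdet]
  · obtain ⟨n, rfl⟩ := Nat.exists_eq_add_of_le hi
    have h := hfn_span_singleton_add_finrank hq_hom hq_ne n
    rw [finrank_homogeneousSubmodule, finrank_homogeneousSubmodule, Fintype.card_fin] at h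
    have hchoose : (n + 4).choose (2 + n) = (n + 2).choose n + (2 * n + 5) := by
      rw [add_comm 2 n, Nat.choose_succ_succ', Nat.choose_succ_succ', Nat.choose_succ_self_right,
        Nat.choose_succ_self_right]
      omega
    rw [show 3 + (2 + n) - 1 = n + 4 by omega, show 3 + n - 1 = n + 2 by omega, hchoose] at h
    omega
end
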